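/- Let φ(x) = ax² + bx + c (degree at most 2) and ψ(x) = dx + e (degree at most 1), and set d_n := dq^n + a[n]_q. Let (Q_n)_{n≥0} be a simple set of polynomials (deg Q_n = n) with leading coefficients a_n ≠ 0, and for n ≥ 0 define R_{n+1} := φ·(D*_{q,ω}Q_n) + q·ψ·Q_n and R_0 := 1. Then R_{n+1}(x) = a_n·q^{1−n}·d_n·x^{n+1} + (terms of degree ≤ n) for every n ≥ 0; consequently (R_n)_{n≥0} is a simple set of polynomials if and only if d_n ≠ 0 for all n ≥ 0, i.e., if and only if (φ, ψ) is a (q,ω)-admissible pair. -/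

import Mathlib

open Polynomial

noncomputable section

namespace HahnOPSPaper

/-- The algebraic dual of the space of complex polynomials. -/
abbrev PDual : Type := Module.Dual ℂ (Polynomial ℂ)

/-- Left multiplication of a functional by a polynomial: `⟨φu, f⟩ = ⟨u, φf⟩`. -/
def pMul (φ : Polynomial ℂ) (u : PDual) : PDual := u ∘ₗ LinearMap.mulLeft ℂ φ

/-- Distributional derivative: `⟨Du, f⟩ = -⟨u, f'⟩`. -/
def dDeriv (u : PDual) : PDual :=
  -(u ∘ₗ (Polynomial.derivative : Polynomial ℂ →ₗ[ℂ] Polynomial ℂ))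

/-- The q-bracket `[n]_q = 1 + q + ⋯ + q^(n-1)`. -/
def qBracket (q : ℂ) (n : ℕ) : ℂ := ∑ i ∈ Finset.range n, q ^ i

/-- q-factorial `[n]_q!`. -/
def qFact (q : ℂ) (n : ℕ) : ℂ := ∏ i ∈ Finset.range n, qBracket q (i + 1)

/-- `D` is Hahn's operator `D_{q,ω}`, i.e. the (unique, for `(q,ω) ≠ (1,0)`) linear operator
with `((q-1)x + ω)·(Df)(x) = f(qx+ω) - f(x)`. -/
def IsHahn (q ω : ℂ) (D : Polynomial ℂ →ₗ[ℂ] Polynomial ℂ) : Prop :=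
  ∀ f : Polynomial ℂ, (C (q - 1) * X + C ω) * D f = f.comp (C q * X + C ω) - f

/-- The operator `(L_{q,ω} f)(x) = f(qx + ω)`. -/
def Lop (q ω : ℂ) : Polynomial ℂ →ₗ[ℂ] Polynomial ℂ :=
  (aeval (C q * X + C ω)).toLinearMap

/-- The distributional Hahn operator `D_{q,ω}` on the dual, built from the ordinary operator
`D*_{q,ω} = D_{1/q,-ω/q}`: `⟨D_{q,ω}u, f⟩ = -q⁻¹·⟨u, D*_{q,ω}f⟩`. -/
def hahnDual (q : ℂ) (Dstar : Polynomial ℂ →ₗ[ℂ] Polynomial ℂ) (u : PDual) : PDual :=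
  (-q⁻¹) • (u ∘ₗ Dstar)

/-- The distributional operator `L_{q,ω}`: `⟨L_{q,ω}u, f⟩ = q⁻¹·⟨u, L_{1/q,-ω/q}f⟩`. -/
def LDual (q ω : ℂ) (u : PDual) : PDual := q⁻¹ • (u ∘ₗ Lop q⁻¹ (-ω / q))

/-- A functional is regular if it admits a monic orthogonal polynomial sequence. -/
def IsRegularFunc (u : PDual) : Prop :=
  ∃ P : ℕ → Polynomial ℂ, (∀ n, (P n).Monic ∧ (P n).natDegree = n) ∧
    (∀ m n, m ≠ n → u (P m * P n) = 0) ∧ (∀ n, u (P n ^ 2) ≠ 0)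

/-- `P` is the monic OPS with respect to `u`. -/
def IsMonicOPS (u : PDual) (P : ℕ → Polynomial ℂ) : Prop :=
  (∀ n, (P n).Monic ∧ (P n).natDegree = n) ∧
    (∀ m n, m ≠ n → u (P m * P n) = 0) ∧ (∀ n, u (P n ^ 2) ≠ 0)

/-- Continuous case: `d_n = d + a·n`. -/
def ddC (a d : ℂ) (n : ℕ) : ℂ := d + a * n

/-- Continuous case: `e_n = e + b·n`. -/
def eeC (b e : ℂ) (n : ℕ) : ℂ := e + b * n

/-- Continuous case: `β_n = n·e_{n-1}/d_{2n-2} - (n+1)·e_n/d_{2n}`. -/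
def betaC (a b d e : ℂ) (n : ℕ) : ℂ :=
  n * eeC b e (n - 1) / ddC a d (2 * n - 2) - (n + 1) * eeC b e n / ddC a d (2 * n)

/-- Continuous case: `γ_{n+1} = -((n+1)·d_{n-1}/(d_{2n-1}·d_{2n+1}))·φ(-e_n/d_{2n})`. -/
def gammaC (a b d e : ℂ) (φ : Polynomial ℂ) (n : ℕ) : ℂ :=
  -((n + 1) * ddC a d (n - 1) / (ddC a d (2 * n - 1) * ddC a d (2 * n + 1))) *
    φ.eval (-(eeC b e n) / ddC a d (2 * n))

/-- `d_n = d·q^n + a·[n]_q`. -/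
def ddQ (q a d : ℂ) (n : ℕ) : ℂ := d * q ^ n + a * qBracket q n

/-- `e_n = e·q^n + (ω·d_n + b)·[n]_q`. -/
def eeQ (q ω a b d e : ℂ) (n : ℕ) : ℂ :=
  e * q ^ n + (ω * ddQ q a d n + b) * qBracket q n

/-- `β_n = ω[n]_q + [n]_q·e_{n-1}/d_{2n-2} - [n+1]_q·e_n/d_{2n}`. -/
def betaQ (q ω a b d e : ℂ) (n : ℕ) : ℂ :=
  ω * qBracket q n + qBracket q n * eeQ q ω a b d e (n - 1) / ddQ q a d (2 * n - 2)
    - qBracket q (n + 1) * eeQ q ω a b d e n / ddQ q a d (2 * n)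

/-- `γ_{n+1} = -(q^n·[n+1]_q·d_{n-1}/(d_{2n-1}·d_{2n+1}))·φ(-e_n/d_{2n})`. -/
def gammaQ (q ω a b d e : ℂ) (φ : Polynomial ℂ) (n : ℕ) : ℂ :=
  -(q ^ n * qBracket q (n + 1) * ddQ q a d (n - 1) /
      (ddQ q a d (2 * n - 1) * ddQ q a d (2 * n + 1))) *
    φ.eval (-(eeQ q ω a b d e n) / ddQ q a d (2 * n))

/-- `Φ(x;n) = ∏_{j=1}^n φ(q^j x + ω[j]_q)`. -/
def PhiQ (q ω : ℂ) (φ : Polynomial ℂ) (n : ℕ) : Polynomial ℂ :=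
  ∏ j ∈ Finset.range n, φ.comp (C (q ^ (j + 1)) * X + C (ω * qBracket q (j + 1)))

/-- `k_n = q^{n(n-3)/2}·∏_{j=0}^{n-1} d_{n+j-1}⁻¹`. -/
def kQ (q a d : ℂ) (n : ℕ) : ℂ :=
  q ^ (((n : ℤ) * ((n : ℤ) - 3)) / 2) * ∏ j ∈ Finset.range n, (ddQ q a d (n + j - 1))⁻¹

/-!
With `L = q⁻¹X - ω/q`, Hahn's identity reads `(L - X)·D*f = f∘L - f`. Cancelling the nonzero
factor `L - X` from `L^(k+1) - X^(k+1) = L·(L^k - X^k) + (L - X)·X^k` gives the recursion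
`D*(X^(k+1)) = L·D*(X^k) + X^k`, hence `D*(X^k) = [k]_{q⁻¹}·X^(k-1) + (lower terms)`. By linearity
`R_(n+1)` has no terms above `X^(n+1)`, and its `X^(n+1)`-coefficient is
`lc(Q_n)·(a[n]_{q⁻¹} + qd) = lc(Q_n)·q^(1-n)·d_n`, which vanishes exactly when `d_n` does.
-/

theorem _root_.Polynomial.degree_apply_sub_C_mul_X_pow_succ_le {R : Type*} [CommRing R]
    (T : R[X] →ₗ[R] R[X]) (c : ℕ → R)
    (hT : ∀ k : ℕ, (T (X ^ k) - C (c k) * X ^ (k + 1)).degree ≤ (k : WithBot ℕ))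
    {f : R[X]} {n : ℕ} (hf : f.natDegree ≤ n) :
    (T f - C (f.coeff n * c n) * X ^ (n + 1)).degree ≤ (n : WithBot ℕ) := by
  classical
  let S : R[X] →ₗ[R] R[X] := T - (lcoeff R n).smulRight (C (c n) * X ^ (n + 1))
  have hS : ∀ g, S g = T g - C (g.coeff n * c n) * X ^ (n + 1) := fun g => by
    simp [S, smul_eq_C_mul, mul_assoc]
  suffices degreeLE R n ≤ (degreeLE R n).comap S by
    simpa only [hS, Submodule.mem_comap, mem_degreeLE] using
      this (mem_degreeLE.2 (degree_le_of_natDegree_le hf))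
  conv_lhs => rw [degreeLE_eq_span_X_pow]
  rw [Submodule.span_le]
  intro p hp
  obtain ⟨k, hk, rfl⟩ := Finset.mem_image.1 hp
  rw [SetLike.mem_coe, Submodule.mem_comap, mem_degreeLE, hS, coeff_X_pow]
  obtain rfl | hne := eq_or_ne k n
  · simpa using hT k
  · have hlt : k + 1 ≤ n := by have := Finset.mem_range.1 hk; omega
    rw [if_neg hne.symm, zero_mul, map_zero, zero_mul, sub_zero,
      ← sub_add_cancel (T (X ^ k)) (C (c k) * X ^ (k + 1))]
    exact degree_add_le_of_degree_le ((hT k).trans (by exact_mod_cast (by omega : k ≤ n)))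
      ((degree_C_mul_X_pow_le _ _).trans (by exact_mod_cast hlt))

theorem _root_.Polynomial.degree_eq_iff_of_degree_sub_C_mul_X_pow_le {R : Type*} [CommRing R]
    {p : R[X]} {κ : R} {n : ℕ} (h : (p - C κ * X ^ (n + 1)).degree ≤ (n : WithBot ℕ)) :
    p.degree = ((n + 1 : ℕ) : WithBot ℕ) ↔ κ ≠ 0 := by
  have hlt : (p - C κ * X ^ (n + 1)).degree < ((n + 1 : ℕ) : WithBot ℕ) :=
    h.trans_lt (by exact_mod_cast n.lt_succ_self)
  constructor
  · rintro hp rfl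
    rw [map_zero, zero_mul, sub_zero, hp] at hlt
    exact hlt.false
  · intro hκ
    rw [← sub_add_cancel p (C κ * X ^ (n + 1)), degree_add_eq_right_of_degree_lt] <;>
      rw [degree_C_mul_X_pow _ hκ]
    exact hlt

theorem pow_mul_qBracket_inv {q : ℂ} (hq : q ≠ 0) (n : ℕ) :
    q ^ n * qBracket q⁻¹ n = q * qBracket q n := by
  induction n with
  | zero => simp [qBracket]
  | succ n ih =>
    have hinv : q ^ n * q⁻¹ ^ n = 1 := by rw [← mul_pow, mul_inv_cancel₀ hq, one_pow]
    simp only [qBracket] at ih ⊢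
    rw [geom_sum_succ', geom_sum_succ, pow_succ]
    linear_combination q * hinv + q * ih

theorem zpow_one_sub_mul_ddQ {q : ℂ} (hq : q ≠ 0) (a d : ℂ) (n : ℕ) :
    q ^ ((1 : ℤ) - n) * ddQ q a d n = q * d + a * qBracket q⁻¹ n := by
  have hinv : (q ^ n)⁻¹ * q ^ n = 1 := inv_mul_cancel₀ (pow_ne_zero n hq)
  rw [zpow_sub₀ hq, zpow_one, zpow_natCast, ddQ, div_eq_mul_inv]
  linear_combination
    (q * d + a * qBracket q⁻¹ n) * hinv - a * (q ^ n)⁻¹ * pow_mul_qBracket_inv hq n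

theorem hahnFactor_ne_zero {q ω : ℂ} (hqω : q ≠ 1 ∨ ω ≠ 0) : C (q - 1) * X + C ω ≠ 0 := by
  intro h
  have h1 : q - 1 = 0 := by simpa using congrArg (coeff · 1) h
  have h0 : ω = 0 := by simpa using congrArg (coeff · 0) h
  exact hqω.elim (· (sub_eq_zero.1 h1)) (· h0)

namespace IsHahn

variable {q ω : ℂ} {D : ℂ[X] →ₗ[ℂ] ℂ[X]}

theorem map_one (hD : IsHahn q ω D) (hqω : q ≠ 1 ∨ ω ≠ 0) : D 1 = 0 := by
  have h := hD 1
  rw [one_comp, sub_self] at h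
  exact (mul_eq_zero.1 h).resolve_left (hahnFactor_ne_zero hqω)

theorem map_X_pow_succ (hD : IsHahn q ω D) (hqω : q ≠ 1 ∨ ω ≠ 0) (k : ℕ) :
    D (X ^ (k + 1)) = (C q * X + C ω) * D (X ^ k) + X ^ k := by
  refine mul_left_cancel₀ (hahnFactor_ne_zero hqω) ?_
  have h := hD (X ^ k)
  rw [hD, X_pow_comp]
  rw [X_pow_comp] at h
  simp only [map_sub, C_1] at h ⊢
  linear_combination -(C q * X + C ω) * h

theorem degree_X_mul_map_X_pow_le (hD : IsHahn q ω D) (hqω : q ≠ 1 ∨ ω ≠ 0) (k : ℕ) :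
    (X * D (X ^ k)).degree ≤ (k : WithBot ℕ) := by
  induction k with
  | zero => simp [hD.map_one hqω]
  | succ k ih =>
    rw [hD.map_X_pow_succ hqω, mul_add, mul_left_comm, ← pow_succ']
    refine degree_add_le_of_degree_le ?_ (degree_X_pow_le _)
    exact (degree_mul_le_of_le degree_linear_le ih).trans (by norm_cast; omega)

-- Multiplying by `X ^ 2` keeps the exponent `k - 1` of the leading term from truncating at `k = 0`.
theorem degree_X_sq_mul_map_X_pow_sub_le (hD : IsHahn q ω D) (hqω : q ≠ 1 ∨ ω ≠ 0) (k : ℕ) :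
    (X ^ 2 * D (X ^ k) - C (qBracket q k) * X ^ (k + 1)).degree ≤ (k : WithBot ℕ) := by
  induction k with
  | zero => simp [hD.map_one hqω, qBracket]
  | succ k ih =>
    have hrec : X ^ 2 * D (X ^ (k + 1)) - C (qBracket q (k + 1)) * X ^ (k + 2) =
        (C q * X + C ω) * (X ^ 2 * D (X ^ k) - C (qBracket q k) * X ^ (k + 1)) +
          C (ω * qBracket q k) * X ^ (k + 1) := by
      simp only [hD.map_X_pow_succ hqω, qBracket, geom_sum_succ, map_add, map_mul, C_1]
      ring
    rw [hrec]
    refine degree_add_le_of_degree_le ?_ (degree_C_mul_X_pow_le _ _)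
    exact (degree_mul_le_of_le degree_linear_le ih).trans (by norm_cast; omega)

theorem degree_sub_C_mul_X_pow_succ_le (hD : IsHahn q ω D) (hqω : q ≠ 1 ∨ ω ≠ 0)
    (a b c d e r : ℂ) {f : ℂ[X]} {n : ℕ} (hf : f.natDegree ≤ n) :
    ((C a * X ^ 2 + C b * X + C c) * D f + C r * ((C d * X + C e) * f) -
      C (f.coeff n * (a * qBracket q n + r * d)) * X ^ (n + 1)).degree ≤ (n : WithBot ℕ) := by
  let T : ℂ[X] →ₗ[ℂ] ℂ[X] := LinearMap.mulLeft ℂ (C a * X ^ 2 + C b * X + C c) ∘ₗ D +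
    LinearMap.mulLeft ℂ (C r * (C d * X + C e))
  suffices hT : ∀ k : ℕ,
      (T (X ^ k) - C (a * qBracket q k + r * d) * X ^ (k + 1)).degree ≤ (k : WithBot ℕ) by
    simpa [T, mul_assoc] using degree_apply_sub_C_mul_X_pow_succ_le T _ hT hf
  intro k
  have hX := hD.degree_X_mul_map_X_pow_le hqω k
  have hdecomp : (C a * X ^ 2 + C b * X + C c) * D (X ^ k) + C r * (C d * X + C e) * X ^ k -
      C (a * qBracket q k + r * d) * X ^ (k + 1) =
      a • (X ^ 2 * D (X ^ k) - C (qBracket q k) * X ^ (k + 1)) + b • (X * D (X ^ k)) +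
        c • D (X ^ k) + (r * e) • X ^ k := by
    simp only [smul_eq_C_mul, map_add, map_mul]
    ring
  simp only [T, LinearMap.add_apply, LinearMap.comp_apply, LinearMap.mulLeft_apply, hdecomp]
  refine degree_add_le_of_degree_le (degree_add_le_of_degree_le (degree_add_le_of_degree_le
    ((degree_smul_le _ _).trans (hD.degree_X_sq_mul_map_X_pow_sub_le hqω k))
    ((degree_smul_le _ _).trans hX)) ((degree_smul_le _ _).trans ?_))
    ((degree_smul_le _ _).trans (degree_X_pow_le k))
  exact (degree_le_mul_left _ X_ne_zero).trans (by rwa [mul_comm])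

end IsHahn

theorem stmt_8_general (q ω : ℂ) (hq0 : q ≠ 0) (hqω : q ≠ 1 ∨ ω ≠ 0)
    (a b c d e : ℂ) (φ ψ : Polynomial ℂ)
    (hφ : φ = C a * X ^ 2 + C b * X + C c) (hψ : ψ = C d * X + C e)
    (Dstar : Polynomial ℂ →ₗ[ℂ] Polynomial ℂ) (hDstar : IsHahn q⁻¹ (-ω / q) Dstar)
    (Q : ℕ → Polynomial ℂ) (hQ : ∀ n : ℕ, (Q n).degree = (n : WithBot ℕ))
    (R : ℕ → Polynomial ℂ) (hR0 : R 0 = 1)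
    (hR : ∀ n : ℕ, R (n + 1) = φ * Dstar (Q n) + C q * (ψ * Q n)) :
    (∀ n : ℕ,
      (R (n + 1) -
        C ((Q n).leadingCoeff * q ^ ((1 : ℤ) - (n : ℤ)) * ddQ q a d n) * X ^ (n + 1)).degree
          ≤ (n : WithBot ℕ)) ∧
    ((∀ n : ℕ, (R n).degree = (n : WithBot ℕ)) ↔ ∀ n : ℕ, ddQ q a d n ≠ 0) := by
  have hqω' : q⁻¹ ≠ 1 ∨ -ω / q ≠ 0 :=
    hqω.imp (by simpa using ·) fun h => div_ne_zero (neg_ne_zero.2 h) hq0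
  have hlead : ∀ n : ℕ, (R (n + 1) -
      C ((Q n).leadingCoeff * q ^ ((1 : ℤ) - (n : ℤ)) * ddQ q a d n) * X ^ (n + 1)).degree
        ≤ (n : WithBot ℕ) := by
    intro n
    have hQn := natDegree_eq_of_degree_eq_some (hQ n)
    convert hDstar.degree_sub_C_mul_X_pow_succ_le hqω' a b c d e q hQn.le using 5
    · rw [hR, hφ, hψ]
    · rw [mul_assoc, zpow_one_sub_mul_ddQ hq0, leadingCoeff, hQn]
      ring
  have hlc : ∀ n, (Q n).leadingCoeff ≠ 0 := fun n =>
    leadingCoeff_ne_zero.2 (ne_zero_of_coe_le_degree (hQ n).ge)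
  refine ⟨hlead, fun hdeg n => ?_, fun hd n => ?_⟩
  · exact right_ne_zero_of_mul ((degree_eq_iff_of_degree_sub_C_mul_X_pow_le (hlead n)).1 (hdeg _))
  · cases n with
    | zero => rw [hR0, degree_one]; rfl
    | succ n =>
      exact (degree_eq_iff_of_degree_sub_C_mul_X_pow_le (hlead n)).2
        (mul_ne_zero (mul_ne_zero (hlc n) (zpow_ne_zero _ hq0)) (hd n))

theorem stmt_8 (q ω : ℂ) (hq0 : q ≠ 0) (hqω : q ≠ 1 ∨ ω ≠ 0)
    (hqr : ∀ n : ℕ, 0 < n → q ^ n = 1 → q = 1)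
    (a b c d e : ℂ) (φ ψ : Polynomial ℂ)
    (hφ : φ = C a * X ^ 2 + C b * X + C c) (hψ : ψ = C d * X + C e)
    (Dstar : Polynomial ℂ →ₗ[ℂ] Polynomial ℂ) (hDstar : IsHahn q⁻¹ (-ω / q) Dstar)
    (Q : ℕ → Polynomial ℂ) (hQ : ∀ n : ℕ, (Q n).degree = (n : WithBot ℕ))
    (R : ℕ → Polynomial ℂ) (hR0 : R 0 = 1)
    (hR : ∀ n : ℕ, R (n + 1) = φ * Dstar (Q n) + C q * (ψ * Q n)) :
    (∀ n : ℕ,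
      (R (n + 1) -
        C ((Q n).leadingCoeff * q ^ ((1 : ℤ) - (n : ℤ)) * ddQ q a d n) * X ^ (n + 1)).degree
          ≤ (n : WithBot ℕ)) ∧
    ((∀ n : ℕ, (R n).degree = (n : WithBot ℕ)) ↔ ∀ n : ℕ, ddQ q a d n ≠ 0) :=
  stmt_8_general q ω hq0 hqω a b c d e φ ψ hφ hψ Dstar hDstar Q hQ R hR0 hR

end HahnOPSPaper
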